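/- arXiv:1309.3691 — 4 statements merged into one kernel-verified Lean document; each statement's English description precedes it below -/
import Mathlib

section
/- If f is a twice differentiable function of two variables, homogeneous of degree r, satisfying the homogeneous Monge–Ampère equation f_{xx} f_{yy} − f_{xy}² = 0, then (r−1)[(r−1) f_x f_y − r f f_{xy}] = 0, i.e., either r = 1 or (r−1) f_x f_y = r f f_{xy}. -/
open Real

noncomputable def fx (f : ℝ × ℝ → ℝ) (p : ℝ × ℝ) : ℝ := fderiv ℝ f p (1, 0)
noncomputable def fy (f : ℝ × ℝ → ℝ) (p : ℝ × ℝ) : ℝ := fderiv ℝ f p (0, 1)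
noncomputable def fxx (f : ℝ × ℝ → ℝ) : ℝ × ℝ → ℝ := fx (fx f)
noncomputable def fxy (f : ℝ × ℝ → ℝ) : ℝ × ℝ → ℝ := fy (fx f)
noncomputable def fyy (f : ℝ × ℝ → ℝ) : ℝ × ℝ → ℝ := fy (fy f)

/-! Euler's identity `x f_x + y f_y = r f` holds on the open set `D`, so it may be differentiated
there; with the symmetry of the Hessian this gives `x f_xx + y f_xy = (r - 1) f_x` and
`x f_xy + y f_yy = (r - 1) f_y`. Multiplying these and using `f_xx f_yy = f_xy²`, the product
`(r - 1)² f_x f_y` becomes `f_xy (x² f_xx + 2 x y f_xy + y² f_yy) = (r - 1) f_xy (x f_x + y f_y)`,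
which is `r (r - 1) f f_xy`. -/

open Filter Topology

section SecondDerivative

variable {E F : Type*} [NormedAddCommGroup E] [NormedSpace ℝ E]
  [NormedAddCommGroup F] [NormedSpace ℝ F] {f : E → F} {r : ℝ} {p : E}

theorem fderiv_fderiv_apply (hf' : DifferentiableAt ℝ (fderiv ℝ f) p) (v w : E) :
    fderiv ℝ (fun q => fderiv ℝ f q w) p v = fderiv ℝ (fderiv ℝ f) p v w := by
  rw [fderiv_clm_apply hf' (differentiableAt_const w)]
  simp

theorem fderiv_apply_self_of_homogeneous (hf : DifferentiableAt ℝ f p)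
    (hhom : ∀ t : ℝ, 0 < t → f (t • p) = t ^ r • f p) :
    fderiv ℝ f p p = r • f p := by
  have hline : HasDerivAt (fun t : ℝ => f (t • p)) (fderiv ℝ f p p) 1 := by
    have hray : HasDerivAt (fun t : ℝ => t • p) p 1 := by
      simpa using (hasDerivAt_id (1 : ℝ)).smul_const p
    exact hf.hasFDerivAt.comp_hasDerivAt_of_eq (1 : ℝ) hray (one_smul ℝ p).symm
  have hpow : HasDerivAt (fun t : ℝ => t ^ r • f p) (r • f p) 1 := by
    simpa using (Real.hasDerivAt_rpow_const (x := 1) (p := r) (Or.inl one_ne_zero)).smul_const (f p)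
  refine hline.unique (hpow.congr_of_eventuallyEq ?_)
  filter_upwards [Ioi_mem_nhds zero_lt_one] with t ht using hhom t ht

theorem fderiv_fderiv_apply_self_of_homogeneous {D : Set E} (hD : D ∈ 𝓝 p)
    (hf : ∀ q ∈ D, DifferentiableAt ℝ f q) (hf' : DifferentiableAt ℝ (fderiv ℝ f) p)
    (hhom : ∀ q ∈ D, ∀ t : ℝ, 0 < t → f (t • q) = t ^ r • f q) (v : E) :
    fderiv ℝ (fderiv ℝ f) p v p = (r - 1) • fderiv ℝ f p v := by
  have heuler : (fun q => fderiv ℝ f q q) =ᶠ[𝓝 p] fun q => r • f q := by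
    filter_upwards [hD] with q hq
    exact fderiv_apply_self_of_homogeneous (hf q hq) (hhom q hq)
  have hlhs := hf'.hasFDerivAt.clm_apply (hasFDerivAt_id p)
  have hrhs := ((hf p (mem_of_mem_nhds hD)).hasFDerivAt.const_smul r).congr_of_eventuallyEq heuler
  have := congrArg (fun L => L v) (hlhs.unique hrhs)
  simp only [add_apply, ContinuousLinearMap.comp_apply, ContinuousLinearMap.id_apply,
    ContinuousLinearMap.flip_apply, smul_apply, id_eq] at this
  rw [sub_smul, one_smul, ← this, add_sub_cancel_left]

end SecondDerivative

theorem ContinuousLinearMap.apply_prod_mk {F : Type*} [NormedAddCommGroup F] [NormedSpace ℝ F]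
    (L : ℝ × ℝ →L[ℝ] F) (a b : ℝ) : L (a, b) = a • L (1, 0) + b • L (0, 1) := by
  rw [← map_smul, ← map_smul, ← map_add]
  simp

theorem fderiv_apply_prod_mk (f : ℝ × ℝ → ℝ) (p : ℝ × ℝ) (a b : ℝ) :
    fderiv ℝ f p (a, b) = a * fx f p + b * fy f p :=
  (fderiv ℝ f p).apply_prod_mk a b

theorem mul_sub_eq_zero_of_euler_of_monge_ampere {x y A B F a b d r : ℝ}
    (h₀ : x * A + y * B = r * F) (h₁ : x * a + y * b = (r - 1) * A)
    (h₂ : x * b + y * d = (r - 1) * B) (hMA : a * d - b ^ 2 = 0) :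
    (r - 1) * ((r - 1) * A * B - r * F * b) = 0 := by
  linear_combination (b * (r - 1)) * h₀ + (b * x - (r - 1) * B) * h₁
    + (b * y - (x * a + y * b)) * h₂ + (x * y) * hMA

theorem stmt1_general (f : ℝ × ℝ → ℝ) (r : ℝ) (D : Set (ℝ × ℝ))
    (hD : IsOpen D)
    (hf : ContDiffOn ℝ 2 f D)
    (hhom : ∀ t : ℝ, 0 < t → ∀ p ∈ D, f (t * p.1, t * p.2) = t ^ r * f p)
    (hMA : ∀ p ∈ D, fxx f p * fyy f p - (fxy f p) ^ 2 = 0) :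
    ∀ p ∈ D, (r - 1) * ((r - 1) * fx f p * fy f p - r * f p * fxy f p) = 0 := by
  intro p hp
  have hf₂ : ContDiffAt ℝ 2 f p := hf.contDiffAt (hD.mem_nhds hp)
  have hdiff : ∀ q ∈ D, DifferentiableAt ℝ f q := fun q hq =>
    (hf.contDiffAt (hD.mem_nhds hq)).differentiableAt two_ne_zero
  have hdiff' : DifferentiableAt ℝ (fderiv ℝ f) p :=
    (hf₂.fderiv_right (m := 1) le_rfl).differentiableAt one_ne_zero
  have hhom' : ∀ q ∈ D, ∀ t : ℝ, 0 < t → f (t • q) = t ^ r • f q := fun q hq t ht =>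
    hhom t ht q hq
  set H := fderiv ℝ (fderiv ℝ f) p
  have hsymm : H (1, 0) (0, 1) = H (0, 1) (1, 0) := hf₂.isSymmSndFDerivAt (by simp) _ _
  have euler : p.1 * fx f p + p.2 * fy f p = r * f p := by
    rw [← fderiv_apply_prod_mk]
    exact fderiv_apply_self_of_homogeneous (hdiff p hp) (hhom' p hp)
  have hxx : fxx f p = H (1, 0) (1, 0) := fderiv_fderiv_apply hdiff' _ _
  have hxy : fxy f p = H (0, 1) (1, 0) := fderiv_fderiv_apply hdiff' _ _
  have hyy : fyy f p = H (0, 1) (0, 1) := fderiv_fderiv_apply hdiff' _ _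
  have euler_snd := fderiv_fderiv_apply_self_of_homogeneous (hD.mem_nhds hp) hdiff hdiff' hhom'
  have euler_fx : p.1 * fxx f p + p.2 * fxy f p = (r - 1) * fx f p := by
    rw [hxx, hxy, ← hsymm, ← smul_eq_mul, ← smul_eq_mul p.2, ← (H (1, 0)).apply_prod_mk]
    exact euler_snd (1, 0)
  have euler_fy : p.1 * fxy f p + p.2 * fyy f p = (r - 1) * fy f p := by
    rw [hxy, hyy, ← smul_eq_mul, ← smul_eq_mul p.2, ← (H (0, 1)).apply_prod_mk]
    exact euler_snd (0, 1)
  exact mul_sub_eq_zero_of_euler_of_monge_ampere euler euler_fx euler_fy (hMA p hp)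

theorem stmt1 (f : ℝ × ℝ → ℝ) (r : ℝ) (D : Set (ℝ × ℝ))
    (hD : IsOpen D) (hcone : ∀ p ∈ D, ∀ t : ℝ, 0 < t → (t * p.1, t * p.2) ∈ D)
    (hf : ContDiffOn ℝ 2 f D)
    (hhom : ∀ t : ℝ, 0 < t → ∀ p ∈ D, f (t * p.1, t * p.2) = t ^ r * f p)
    (hMA : ∀ p ∈ D, fxx f p * fyy f p - (fxy f p) ^ 2 = 0) :
    ∀ p ∈ D, (r - 1) * ((r - 1) * fx f p * fy f p - r * f p * fxy f p) = 0 :=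
  stmt1_general f r D hD hf hhom hMA
end

section
/- Let h be a C² real function on an open interval with h > 0 and h' ≠ 0, satisfying (r−1)(h')² − r h h'' = 0 for some real r ≠ 0. Then h(u) = (c₁ u + c₂)^r for some real constants c₁ ≠ 0 and c₂. -/
open Real

/-! The substitution `g = h ^ (1 / r)` linearises the equation:
`g'' = r⁻² h ^ (1 / r - 2) (r h h'' - (r - 1) h'²) = 0`, so `g` is affine on the interval,
its slope `g' = r⁻¹ h' h ^ (1 / r - 1)` is nonzero, and `h = g ^ r`. -/

theorem IsOpen.exists_affine_of_hasDerivAt_hasDerivAt_zero {s : Set ℝ} {f f' : ℝ → ℝ}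
    (hs : IsOpen s) (hs' : IsPreconnected s) (hf : ∀ x ∈ s, HasDerivAt f (f' x) x)
    (hf' : ∀ x ∈ s, HasDerivAt f' 0 x) :
    ∃ c₁ c₂ : ℝ, ∀ x ∈ s, f' x = c₁ ∧ f x = c₁ * x + c₂ := by
  obtain ⟨c₁, hc₁⟩ := hs.exists_is_const_of_deriv_eq_zero hs'
    (fun x hx => (hf' x hx).differentiableAt.differentiableWithinAt)
    (fun x hx => (hf' x hx).deriv)
  have hlin : ∀ x ∈ s, HasDerivAt (fun y => f y - c₁ * y) 0 x := fun x hx =>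
    ((hf x hx).sub ((hasDerivAt_id x).const_mul c₁)).congr_deriv (by simp [hc₁ x hx])
  obtain ⟨c₂, hc₂⟩ := hs.exists_is_const_of_deriv_eq_zero hs'
    (fun x hx => (hlin x hx).differentiableAt.differentiableWithinAt)
    (fun x hx => (hlin x hx).deriv)
  exact ⟨c₁, c₂, fun x hx => ⟨hc₁ x hx, by linarith [hc₂ x hx]⟩⟩

theorem ContDiffOn.hasDerivAt_deriv_deriv {f : ℝ → ℝ} {s : Set ℝ} {x : ℝ}
    (hf : ContDiffOn ℝ 2 f s) (hs : IsOpen s) (hx : x ∈ s) :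
    HasDerivAt (deriv f) (deriv (deriv f) x) x :=
  (((hf.deriv_of_isOpen hs (by norm_num : (1 : WithTop ℕ∞) + 1 ≤ 2)).differentiableOn
    one_ne_zero) x hx).differentiableAt (hs.mem_nhds hx) |>.hasDerivAt

theorem hasDerivAt_deriv_rpow_inv_eq_zero {h h' : ℝ → ℝ} {h'' r u : ℝ} (hr : r ≠ 0)
    (hh : HasDerivAt h (h' u) u) (hh' : HasDerivAt h' h'' u) (hpos : 0 < h u)
    (hode : (r - 1) * h' u ^ 2 - r * h u * h'' = 0) :
    HasDerivAt (fun x => h' x * r⁻¹ * h x ^ (r⁻¹ - 1)) 0 u := by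
  refine ((hh'.mul_const r⁻¹).mul (hh.rpow_const (p := r⁻¹ - 1) (Or.inl hpos.ne'))).congr_deriv ?_
  have hsplit : h u ^ (r⁻¹ - 1) = h u ^ (r⁻¹ - 1 - 1) * h u := by
    rw [← rpow_add_one hpos.ne']
    norm_num
  rw [hsplit]
  linear_combination (-h u ^ (r⁻¹ - 1 - 1) * r⁻¹ ^ 2) * hode
    - h u ^ (r⁻¹ - 1 - 1) * r⁻¹ * (h u * h'' - h' u ^ 2) * mul_inv_cancel₀ hr

theorem stmt4 (a b r : ℝ) (hab : a < b) (hr : r ≠ 0) (h : ℝ → ℝ)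
    (hC2 : ContDiffOn ℝ 2 h (Set.Ioo a b))
    (hpos : ∀ u ∈ Set.Ioo a b, 0 < h u)
    (hd : ∀ u ∈ Set.Ioo a b, deriv h u ≠ 0)
    (hode : ∀ u ∈ Set.Ioo a b,
      (r - 1) * (deriv h u) ^ 2 - r * h u * deriv (deriv h) u = 0) :
    ∃ c₁ c₂ : ℝ, c₁ ≠ 0 ∧ (∀ u ∈ Set.Ioo a b, 0 < c₁ * u + c₂) ∧
      ∀ u ∈ Set.Ioo a b, h u = (c₁ * u + c₂) ^ r := by
  have hs : IsOpen (Set.Ioo a b) := isOpen_Ioo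
  have hh : ∀ u ∈ Set.Ioo a b, HasDerivAt h (deriv h u) u := fun u hu =>
    ((hC2.differentiableOn (by norm_num) u hu).differentiableAt (hs.mem_nhds hu)).hasDerivAt
  obtain ⟨c₁, c₂, hc⟩ := hs.exists_affine_of_hasDerivAt_hasDerivAt_zero isPreconnected_Ioo
    (f := fun u => h u ^ r⁻¹) (fun u hu => (hh u hu).rpow_const (Or.inl (hpos u hu).ne'))
    (fun u hu => hasDerivAt_deriv_rpow_inv_eq_zero hr (hh u hu)
      (hC2.hasDerivAt_deriv_deriv hs hu) (hpos u hu) (hode u hu))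
  have hm : (a + b) / 2 ∈ Set.Ioo a b := ⟨by linarith, by linarith⟩
  refine ⟨c₁, c₂, ?_, fun u hu => ?_, fun u hu => ?_⟩
  · rw [← (hc _ hm).1]
    exact mul_ne_zero (mul_ne_zero (hd _ hm) (inv_ne_zero hr)) (rpow_pos_of_pos (hpos _ hm) _).ne'
  · rw [← (hc u hu).2]
    exact rpow_pos_of_pos (hpos u hu) _
  · rw [← (hc u hu).2, rpow_inv_rpow (hpos u hu).le hr]
end

section
/- Let f be a C² function on an open connected domain D ⊆ ℝⁿ whose Hessian has rank at most 1 everywhere (all 2×2 minors of the Hessian vanish), homogeneous of degree r ≠ 1, with all first partial derivatives nowhere zero. Then f(x₁,…,xₙ) = F(c₁x₁ + ⋯ + cₙxₙ) for some real-valued function F and nonzero constants c₁,…,cₙ. -/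
/-!
The first partial derivatives `∂ⱼf` are homogeneous of degree `r - 1 ≠ 0`, so Euler's identity
`∑ₗ xₗ ∂ₗ∂ⱼf = (r - 1) ∂ⱼf` together with the vanishing `2 × 2` minors of the Hessian gives
`∂ⱼf · ∇∂ᵢf = ∂ᵢf · ∇∂ⱼf`. Hence every ratio `∂ᵢf / ∂ⱼf` is constant on the connected set `D`,
and `∇f = g · L` for a fixed linear form `L(x) = ∑ cᵢ xᵢ`. Euler's identity for `f` now reads
`r f = g L`; differentiating it at a zero of `L` would give `r = 1`, so `L` has constant sign
on `D`, and then `f · |L|^(-r)` has zero gradient: `f = A |L|^r`.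
-/

open Real

variable {n : ℕ}

/-- first partial derivative ∂f/∂xᵢ -/
noncomputable def pd (f : (Fin n → ℝ) → ℝ) (i : Fin n) (x : Fin n → ℝ) : ℝ :=
  fderiv ℝ f x (Pi.single i 1)

/-- second partial derivative ∂²f/∂xᵢ∂xⱼ -/
noncomputable def pd2 (f : (Fin n → ℝ) → ℝ) (i j : Fin n) (x : Fin n → ℝ) : ℝ :=
  pd (fun y => pd f j y) i x

open Filter Set Topology

theorem IsPreconnected.forall_pos_or_forall_neg {X : Type*} [TopologicalSpace X] {s : Set X}
    {u : X → ℝ} (hs : IsPreconnected s) (hu : ContinuousOn u s) (h0 : ∀ x ∈ s, u x ≠ 0) :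
    (∀ x ∈ s, 0 < u x) ∨ ∀ x ∈ s, u x < 0 := by
  by_contra! ⟨⟨x, hx, hux⟩, y, hy, huy⟩
  obtain ⟨z, hz, huz⟩ := hs.intermediate_value hx hy hu ⟨hux, huy⟩
  exact h0 z hz huz

section

variable {E : Type*} [NormedAddCommGroup E] [NormedSpace ℝ E] {f g : E → ℝ} {L : E →L[ℝ] ℝ}
  {D : Set E} {r : ℝ}

def IsHomogeneousOn (f : E → ℝ) (D : Set E) (r : ℝ) : Prop :=
  ∀ t : ℝ, 0 < t → ∀ x ∈ D, f (t • x) = t ^ r * f x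

namespace IsHomogeneousOn

variable {x : E}

theorem fderiv_apply_self (hf : IsHomogeneousOn f D r) (hx : x ∈ D)
    (hfx : DifferentiableAt ℝ f x) : fderiv ℝ f x x = r * f x := by
  have hray : HasDerivAt (fun t : ℝ => f (t • x)) (fderiv ℝ f x x) 1 := by
    have hline : HasDerivAt (fun t : ℝ => t • x) x 1 := by
      simpa using (hasDerivAt_id (1 : ℝ)).smul_const x
    exact (by simpa using hfx.hasFDerivAt : HasFDerivAt f (fderiv ℝ f x) ((1 : ℝ) • x))
      |>.comp_hasDerivAt 1 hline
  have hpow : HasDerivAt (fun t : ℝ => t ^ r * f x) (r * f x) 1 := by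
    simpa using (hasDerivAt_rpow_const (p := r) (Or.inl one_ne_zero)).mul_const (f x)
  have heq : (fun t : ℝ => f (t • x)) =ᶠ[𝓝 1] fun t => t ^ r * f x :=
    eventually_of_mem (Ioi_mem_nhds one_pos) fun t ht => hf t ht x hx
  exact hray.unique (hpow.congr_of_eventuallyEq heq)

/-- Near `t • x`, `f` agrees with `z ↦ t ^ r * f (t⁻¹ • z)`. -/
theorem fderiv_smul (hf : IsHomogeneousOn f D r) (hD : IsOpen D) (hx : x ∈ D)
    (hfx : DifferentiableAt ℝ f x) {t : ℝ} (ht : 0 < t) :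
    fderiv ℝ f (t • x) = t ^ (r - 1) • fderiv ℝ f x := by
  have hback : t⁻¹ • t • x = x := inv_smul_smul₀ ht.ne' x
  have hscale : HasFDerivAt (fun z : E => t⁻¹ • z) (t⁻¹ • ContinuousLinearMap.id ℝ E) (t • x) :=
    (ContinuousLinearMap.id ℝ E).hasFDerivAt.const_smul t⁻¹
  have hfx' : HasFDerivAt f (fderiv ℝ f x) (t⁻¹ • t • x) := by rw [hback]; exact hfx.hasFDerivAt
  have hderiv : HasFDerivAt (fun z => t ^ r * f (t⁻¹ • z)) _ (t • x) :=
    (hfx'.comp (t • x) hscale).const_mul (t ^ r)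
  have heq : f =ᶠ[𝓝 (t • x)] fun z => t ^ r * f (t⁻¹ • z) := by
    have hcont : Tendsto (fun z : E => t⁻¹ • z) (𝓝 (t • x)) (𝓝 x) :=
      (continuous_const_smul t⁻¹).tendsto' _ _ hback
    filter_upwards [hcont (hD.mem_nhds hx)] with z hz
    rw [← hf t ht _ hz, smul_inv_smul₀ ht.ne']
  rw [heq.fderiv_eq, hderiv.fderiv]
  ext v
  simp only [ContinuousLinearMap.comp_smulₛₗ, map_inv₀, ringHom_apply, ContinuousLinearMap.comp_id,
    smul_apply, smul_eq_mul, Real.rpow_sub_one ht.ne']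
  ring

end IsHomogeneousOn

theorem IsOpen.div_eq_div_of_smul_fderiv_eq {h : E → ℝ} (hD : IsOpen D) (hD' : IsPreconnected D)
    (hg : DifferentiableOn ℝ g D) (hh : DifferentiableOn ℝ h D) (h0 : ∀ x ∈ D, h x ≠ 0)
    (hgh : ∀ x ∈ D, h x • fderiv ℝ g x = g x • fderiv ℝ h x) {x y : E} (hx : x ∈ D)
    (hy : y ∈ D) : g x / h x = g y / h y := by
  have hderiv : ∀ z ∈ D, HasFDerivAt (fun z => g z / h z) (0 : E →L[ℝ] ℝ) z := by
    intro z hz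
    have hgz := (hg.differentiableAt (hD.mem_nhds hz)).hasFDerivAt
    have hinv : HasFDerivAt (fun z => (h z)⁻¹) _ z :=
      (hasDerivAt_inv (h0 z hz)).comp_hasFDerivAt z
        (hh.differentiableAt (hD.mem_nhds hz)).hasFDerivAt
    have hzero : g z • (-(h z ^ 2)⁻¹ • fderiv ℝ h z) + (h z)⁻¹ • fderiv ℝ g z = 0 := by
      ext v
      have hv := DFunLike.congr_fun (hgh z hz) v
      simp only [smul_apply, smul_eq_mul] at hv
      simp only [add_apply, smul_apply, smul_eq_mul, zero_apply]
      field_simp [h0 z hz]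
      linear_combination hv
    simpa only [hzero, div_eq_mul_inv] using hgz.fun_mul hinv
  exact hD.is_const_of_fderiv_eq_zero hD'
    (fun z hz => (hderiv z hz).differentiableAt.differentiableWithinAt)
    (fun z hz => (hderiv z hz).fderiv) hx hy

theorem apply_ne_zero_of_fderiv_eq_smul (hD : IsOpen D) (hfd : DifferentiableOn ℝ f D)
    (hgd : DifferentiableOn ℝ g D) (hg0 : ∀ x ∈ D, g x ≠ 0) (hL : L ≠ 0) (hr : r ≠ 1)
    (hfg : ∀ x ∈ D, fderiv ℝ f x = g x • L) (heuler : ∀ x ∈ D, r * f x = g x * L x)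
    {x : E} (hx : x ∈ D) : L x ≠ 0 := by
  intro hLx
  have hlhs : HasFDerivAt (fun y => r * f y) (r • (g x • L)) x := by
    rw [← hfg x hx]
    exact (hfd.differentiableAt (hD.mem_nhds hx)).hasFDerivAt.const_mul r
  have hrhs : HasFDerivAt (fun y => g y * L y) (g x • L) x := by
    simpa [hLx] using (hgd.differentiableAt (hD.mem_nhds hx)).hasFDerivAt.fun_mul L.hasFDerivAt
  have heq : (fun y => r * f y) =ᶠ[𝓝 x] fun y => g y * L y :=
    eventually_of_mem (hD.mem_nhds hx) heuler
  have hsame : r • (g x • L) = g x • L := (hlhs.congr_of_eventuallyEq heq.symm).unique hrhs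
  obtain ⟨v, hv⟩ := DFunLike.ne_iff.1 hL
  have hv' := DFunLike.congr_fun hsame v
  simp only [smul_apply, smul_eq_mul] at hv'
  exact mul_ne_zero (mul_ne_zero (sub_ne_zero.2 hr) (hg0 x hx)) hv (by linear_combination hv')

theorem exists_eq_mul_rpow_of_fderiv_eq_smul (hD : IsOpen D) (hD' : IsPreconnected D)
    (hfd : DifferentiableOn ℝ f D) (hfg : ∀ x ∈ D, fderiv ℝ f x = g x • L)
    (heuler : ∀ x ∈ D, r * f x = g x * L x) (hpos : ∀ x ∈ D, 0 < L x) :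
    ∃ A, ∀ x ∈ D, f x = A * L x ^ r := by
  have hderiv : ∀ x ∈ D, HasFDerivAt (fun y => f y * L y ^ (-r)) (0 : E →L[ℝ] ℝ) x := by
    intro x hx
    have hpow := L.hasFDerivAt.rpow_const (p := -r) (Or.inl (hpos x hx).ne')
    have hzero : f x • ((-r * L x ^ (-r - 1)) • L) + L x ^ (-r) • fderiv ℝ f x = 0 := by
      rw [hfg x hx, Real.rpow_sub_one (hpos x hx).ne', smul_smul, smul_smul, ← add_smul]
      convert zero_smul ℝ L using 2
      rw [div_eq_mul_inv]
      linear_combination (-(L x ^ (-r) * (L x)⁻¹)) * heuler x hx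
        - (L x ^ (-r) * g x) * mul_inv_cancel₀ (hpos x hx).ne'
    simpa only [hzero] using (hfd.differentiableAt (hD.mem_nhds hx)).hasFDerivAt.fun_mul hpow
  obtain ⟨A, hA⟩ := hD.exists_is_const_of_fderiv_eq_zero hD'
    (fun x hx => (hderiv x hx).differentiableAt.differentiableWithinAt)
    (fun x hx => (hderiv x hx).fderiv)
  refine ⟨A, fun x hx => ?_⟩
  rw [← hA x hx, mul_assoc, ← Real.rpow_add (hpos x hx), neg_add_cancel, Real.rpow_zero, mul_one]

theorem IsHomogeneousOn.exists_eq_mul_abs_rpow (hf : IsHomogeneousOn f D r) (hr : r ≠ 1)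
    (hD : IsOpen D) (hD' : IsPreconnected D) (hfd : DifferentiableOn ℝ f D)
    (hgd : DifferentiableOn ℝ g D) (hg0 : ∀ x ∈ D, g x ≠ 0) (hL : L ≠ 0)
    (hfg : ∀ x ∈ D, fderiv ℝ f x = g x • L) : ∃ A, ∀ x ∈ D, f x = A * |L x| ^ r := by
  have heuler : ∀ x ∈ D, r * f x = g x * L x := fun x hx => by
    rw [← hf.fderiv_apply_self hx (hfd.differentiableAt (hD.mem_nhds hx)), hfg x hx]
    rfl
  have hL0 : ∀ x ∈ D, L x ≠ 0 := fun x hx =>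
    apply_ne_zero_of_fderiv_eq_smul hD hfd hgd hg0 hL hr hfg heuler hx
  rcases hD'.forall_pos_or_forall_neg L.continuous.continuousOn hL0 with hpos | hneg
  · obtain ⟨A, hA⟩ := exists_eq_mul_rpow_of_fderiv_eq_smul hD hD' hfd hfg heuler hpos
    exact ⟨A, fun x hx => by rw [abs_of_pos (hpos x hx), hA x hx]⟩
  · obtain ⟨A, hA⟩ := exists_eq_mul_rpow_of_fderiv_eq_smul (g := -g) (L := -L) (r := r)
      hD hD' hfd
      (fun x hx => by rw [hfg x hx, Pi.neg_apply, neg_smul_neg])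
      (fun x hx => by rw [heuler x hx, Pi.neg_apply, neg_apply, neg_mul_neg])
      (fun x hx => neg_pos.2 (hneg x hx))
    exact ⟨A, fun x hx => by rw [abs_of_neg (hneg x hx), hA x hx]; rfl⟩

end

theorem ContinuousLinearMap.apply_eq_sum_mul_single (L : (Fin n → ℝ) →L[ℝ] ℝ)
    (x : Fin n → ℝ) : L x = ∑ i, x i * L (Pi.single i 1) := by
  have hsingle : ∀ i, (Pi.single i 1 : Fin n → ℝ) = fun j => if i = j then 1 else 0 :=
    fun i => funext fun j => by simp [Pi.single_apply, eq_comm]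
  simpa only [hsingle, smul_eq_mul, coe_coe] using L.toLinearMap.pi_apply_eq_sum_univ x

theorem ContinuousLinearMap.ext_single {L M : (Fin n → ℝ) →L[ℝ] ℝ}
    (h : ∀ i, L (Pi.single i 1) = M (Pi.single i 1)) : L = M :=
  ext fun x => by rw [apply_eq_sum_mul_single L, apply_eq_sum_mul_single M]; simp only [h]

theorem mul_sum_eq_mul_sum_of_minors {ι : Type*} [Fintype ι] {H : ι → ι → ℝ}
    (hH : ∀ i j k l, H i l * H j k = H i k * H j l) (x : ι → ℝ) (i j k : ι) :
    H k i * ∑ l, x l * H l j = H k j * ∑ l, x l * H l i := by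
  simp only [Finset.mul_sum]
  exact Finset.sum_congr rfl fun l _ => by linear_combination x l * hH k l j i

section

variable {f : (Fin n → ℝ) → ℝ} {D : Set (Fin n → ℝ)} {r : ℝ} {x : Fin n → ℝ}

theorem ContDiffOn.differentiableOn_pd (hf : ContDiffOn ℝ 2 f D) (hD : IsOpen D) (i : Fin n) :
    DifferentiableOn ℝ (pd f i) D :=
  ((hf.fderiv_of_isOpen (m := 1) hD (by norm_num)).clm_apply contDiffOn_const).differentiableOn
    one_ne_zero

theorem isHomogeneousOn_pd (hf : IsHomogeneousOn f D r) (hD : IsOpen D)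
    (hfd : DifferentiableOn ℝ f D) (i : Fin n) :
    IsHomogeneousOn (pd f i) D (r - 1) := fun t ht x hx => by
  simp only [pd, hf.fderiv_smul hD hx (hfd.differentiableAt (hD.mem_nhds hx)) ht]
  rfl

theorem IsHomogeneousOn.sum_mul_pd (hf : IsHomogeneousOn f D r) (hx : x ∈ D)
    (hfx : DifferentiableAt ℝ f x) : ∑ i, x i * pd f i x = r * f x := by
  rw [← hf.fderiv_apply_self hx hfx, (fderiv ℝ f x).apply_eq_sum_mul_single]
  rfl

theorem IsHomogeneousOn.pd_smul_fderiv_pd (hf : IsHomogeneousOn f D r) (hr : r ≠ 1)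
    (hD : IsOpen D) (hfd : DifferentiableOn ℝ f D) (hpdd : ∀ i, DifferentiableOn ℝ (pd f i) D)
    (hx : x ∈ D) (hrank : ∀ i j k l, pd2 f i l x * pd2 f j k x = pd2 f i k x * pd2 f j l x)
    (i j : Fin n) : pd f j x • fderiv ℝ (pd f i) x = pd f i x • fderiv ℝ (pd f j) x := by
  have heuler : ∀ i, ∑ l, x l * pd2 f l i x = (r - 1) * pd f i x := fun i =>
    (isHomogeneousOn_pd hf hD hfd i).sum_mul_pd hx ((hpdd i).differentiableAt (hD.mem_nhds hx))
  refine ContinuousLinearMap.ext_single fun k => ?_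
  have hk := mul_sum_eq_mul_sum_of_minors hrank x i j k
  rw [heuler, heuler] at hk
  have : (r - 1) * (pd f j x * pd2 f k i x - pd f i x * pd2 f k j x) = 0 := by
    linear_combination hk
  exact sub_eq_zero.1 ((mul_eq_zero.1 this).resolve_left (sub_ne_zero.2 hr))

theorem IsHomogeneousOn.fderiv_eq_smul_fderiv (hf : IsHomogeneousOn f D r) (hr : r ≠ 1)
    (hD : IsOpen D) (hD' : IsPreconnected D) (hfd : DifferentiableOn ℝ f D)
    (hpdd : ∀ i, DifferentiableOn ℝ (pd f i) D) {i₀ : Fin n} (hpd : ∀ x ∈ D, pd f i₀ x ≠ 0)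
    (hrank : ∀ x ∈ D, ∀ i j k l, pd2 f i l x * pd2 f j k x = pd2 f i k x * pd2 f j l x)
    {x y : Fin n → ℝ} (hx : x ∈ D) (hy : y ∈ D) :
    fderiv ℝ f x = (pd f i₀ x / pd f i₀ y) • fderiv ℝ f y := by
  refine ContinuousLinearMap.ext_single fun i => ?_
  have hratio : pd f i x / pd f i₀ x = pd f i y / pd f i₀ y :=
    hD.div_eq_div_of_smul_fderiv_eq hD' (hpdd i) (hpdd i₀) hpd
      (fun z hz => hf.pd_smul_fderiv_pd hr hD hfd hpdd hz (hrank z hz) i i₀) hx hy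
  change pd f i x = pd f i₀ x / pd f i₀ y * pd f i y
  rw [div_eq_div_iff (hpd x hx) (hpd y hy)] at hratio
  field_simp [hpd y hy]
  linear_combination hratio

end

theorem stmt10_general (n : ℕ) (hn : 2 ≤ n) (r : ℝ) (hr : r ≠ 1)
    (f : (Fin n → ℝ) → ℝ) (D : Set (Fin n → ℝ))
    (hD : IsOpen D) (hconn : IsConnected D)
    (hf : ContDiffOn ℝ 2 f D)
    (hhom : ∀ t : ℝ, 0 < t → ∀ x ∈ D, f (t • x) = t ^ r * f x)
    (hpd : ∀ i : Fin n, ∀ x ∈ D, pd f i x ≠ 0)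
    (hrank : ∀ x ∈ D, ∀ i j k l : Fin n,
      pd2 f i l x * pd2 f j k x = pd2 f i k x * pd2 f j l x) :
    ∃ c : Fin n → ℝ, (∀ i, c i ≠ 0) ∧
      ∃ F : ℝ → ℝ, ∀ x ∈ D, f x = F (∑ i, c i * x i) := by
  obtain ⟨x₀, hx₀⟩ := hconn.nonempty
  let i₀ : Fin n := ⟨0, by omega⟩
  have hhom' : IsHomogeneousOn f D r := hhom
  have hfd : DifferentiableOn ℝ f D := hf.differentiableOn (by norm_num)
  have hpdd : ∀ i, DifferentiableOn ℝ (pd f i) D := hf.differentiableOn_pd hD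
  have hL : fderiv ℝ f x₀ ≠ 0 := fun h => hpd i₀ x₀ hx₀ (by simp [pd, h])
  have hgd : DifferentiableOn ℝ (fun x => pd f i₀ x / pd f i₀ x₀) D := by
    simpa only [div_eq_mul_inv] using (hpdd i₀).mul_const _
  obtain ⟨A, hA⟩ := hhom'.exists_eq_mul_abs_rpow hr hD hconn.isPreconnected hfd hgd
    (fun x hx => div_ne_zero (hpd i₀ x hx) (hpd i₀ x₀ hx₀)) hL fun x hx =>
      hhom'.fderiv_eq_smul_fderiv hr hD hconn.isPreconnected hfd hpdd (hpd i₀) hrank hx hx₀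
  refine ⟨fun i => pd f i x₀, fun i => hpd i x₀ hx₀, fun u => A * |u| ^ r, fun x hx => ?_⟩
  rw [hA x hx, (fderiv ℝ f x₀).apply_eq_sum_mul_single]
  simp only [pd, mul_comm]

theorem stmt10 (n : ℕ) (hn : 2 ≤ n) (r : ℝ) (hr : r ≠ 1)
    (f : (Fin n → ℝ) → ℝ) (D : Set (Fin n → ℝ))
    (hD : IsOpen D) (hconn : IsConnected D)
    (hcone : ∀ x ∈ D, ∀ t : ℝ, 0 < t → t • x ∈ D)
    (hf : ContDiffOn ℝ 2 f D)
    (hhom : ∀ t : ℝ, 0 < t → ∀ x ∈ D, f (t • x) = t ^ r * f x)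
    (hpd : ∀ i : Fin n, ∀ x ∈ D, pd f i x ≠ 0)
    (hrank : ∀ x ∈ D, ∀ i j k l : Fin n,
      pd2 f i l x * pd2 f j k x = pd2 f i k x * pd2 f j l x) :
    ∃ c : Fin n → ℝ, (∀ i, c i ≠ 0) ∧
      ∃ F : ℝ → ℝ, ∀ x ∈ D, f x = F (∑ i, c i * x i) :=
  stmt10_general n hn r hr f D hD hconn hf hhom hpd hrank
end

section
/- The function f(x,y,z) = (x + y + √(yz))^r on the positive octant, with r > 1, has Hessian determinant identically zero (so its graph hypersurface in ℝ⁴ has vanishing Gauss–Kronecker curvature), but its Hessian has rank greater than 1 at some point (so the graph hypersurface is not flat). -/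
/-!
Write `f = φ ∘ g` with `φ t = t ^ r` and `g x = x 0 + x 1 + √(x 1 * x 2)`. The chain rule gives
`Hess f = φ''(g) ∇g ∇gᵀ + φ'(g) Hess g`, and `Hess g` is the Hessian of `√(x 1 * x 2)`, which is
homogeneous of degree one, hence `Hess g = c w wᵀ` with `w = (0, x 2, -x 1)`. So `Hess f` is a
combination of two rank-one matrices and is singular in dimension three, while its leading
`2 × 2` minor is `-φ''(g) φ'(g) c (∂₀g w₁ - ∂₁g w₀)² = -φ''(g) φ'(g) c (x 2)²`, nonzero for `r > 1`.
-/

open Real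

variable {n : ℕ}

noncomputable def hess (f : (Fin n → ℝ) → ℝ) (x : Fin n → ℝ) :
    Matrix (Fin n) (Fin n) ℝ :=
  Matrix.of fun i j => pd2 f i j x

open Filter Topology

theorem hasDerivAt_one_div_two_mul_sqrt {t : ℝ} (ht : 0 < t) :
    HasDerivAt (fun t => 1 / (2 * √t)) (-1 / (4 * t * √t)) t := by
  have hs : 0 < √t := sqrt_pos.2 ht
  simp only [one_div]
  refine (((hasDerivAt_sqrt ht.ne').const_mul 2).inv (by positivity)).congr_deriv ?_
  rw [mul_pow, sq_sqrt ht.le]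
  field_simp
  norm_num

section PartialDerivatives

variable {f s : (Fin n → ℝ) → ℝ} {x : Fin n → ℝ} {i j : Fin n}

theorem pd_eq_of_hasFDerivAt {f' : (Fin n → ℝ) →L[ℝ] ℝ} (h : HasFDerivAt f f' x) :
    pd f i x = f' (Pi.single i 1) := by
  rw [pd, h.fderiv]

theorem pd2_eq_of_eventuallyEq {D : (Fin n → ℝ) → ℝ} {D' : (Fin n → ℝ) →L[ℝ] ℝ}
    (h : pd f j =ᶠ[𝓝 x] D) (hD : HasFDerivAt D D' x) : pd2 f i j x = D' (Pi.single i 1) := by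
  rw [pd2, pd, h.fderiv_eq, hD.fderiv]

theorem differentiableAt_pd (hf : ContDiffAt ℝ 2 f x) : DifferentiableAt ℝ (pd f j) x :=
  ((hf.fderiv_right (m := 1) (by norm_num)).differentiableAt one_ne_zero).clm_apply
    (differentiableAt_const _)

theorem eventually_differentiableAt (hf : ContDiffAt ℝ 2 f x) :
    ∀ᶠ y in 𝓝 x, DifferentiableAt ℝ f y :=
  (hf.eventually (by simp)).mono fun _ hy => hy.differentiableAt two_ne_zero

theorem pd_comp {φ : ℝ → ℝ} {φ' : ℝ} (hφ : HasDerivAt φ φ' (f x)) (hf : DifferentiableAt ℝ f x) :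
    pd (fun y => φ (f y)) i x = φ' * pd f i x :=
  pd_eq_of_hasFDerivAt (hφ.comp_hasFDerivAt x hf.hasFDerivAt)

theorem pd2_comp {φ φ' : ℝ → ℝ} {φ'' : ℝ} (hf : ContDiffAt ℝ 2 f x)
    (hφ : ∀ᶠ y in 𝓝 x, HasDerivAt φ (φ' (f y)) (f y)) (hφ' : HasDerivAt φ' φ'' (f x)) :
    pd2 (fun y => φ (f y)) i j x = φ'' * pd f i x * pd f j x + φ' (f x) * pd2 f i j x := by
  have hpd : pd (fun y => φ (f y)) j =ᶠ[𝓝 x] fun y => φ' (f y) * pd f j y := by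
    filter_upwards [hφ, eventually_differentiableAt hf] with y hφy hfy
    exact pd_comp hφy hfy
  rw [pd2_eq_of_eventuallyEq hpd
    ((hφ'.comp_hasFDerivAt x (hf.differentiableAt two_ne_zero).hasFDerivAt).mul
      (differentiableAt_pd hf).hasFDerivAt)]
  simp only [add_apply, smul_apply, smul_eq_mul, Function.comp_apply]
  unfold pd2 pd
  ring

theorem pd_clm_add (L : (Fin n → ℝ) →L[ℝ] ℝ) (hs : DifferentiableAt ℝ s x) :
    pd (fun y => L y + s y) i x = L (Pi.single i 1) + pd s i x :=
  pd_eq_of_hasFDerivAt (L.hasFDerivAt.add hs.hasFDerivAt)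

theorem pd2_clm_add (L : (Fin n → ℝ) →L[ℝ] ℝ) (hs : ContDiffAt ℝ 2 s x) :
    pd2 (fun y => L y + s y) i j x = pd2 s i j x := by
  have hpd : pd (fun y => L y + s y) j =ᶠ[𝓝 x] fun y => L (Pi.single j 1) + pd s j y :=
    (eventually_differentiableAt hs).mono fun _ hy => pd_clm_add L hy
  exact pd2_eq_of_eventuallyEq hpd ((differentiableAt_pd hs).hasFDerivAt.const_add _)

theorem pd_mul_apply (a b : Fin n) :
    pd (fun y => y a * y b) i x =
      (Pi.single i 1 : Fin n → ℝ) a * x b + x a * (Pi.single i 1 : Fin n → ℝ) b := by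
  rw [pd_eq_of_hasFDerivAt ((hasFDerivAt_apply a x).fun_mul (hasFDerivAt_apply b x))]
  simp only [add_apply, smul_apply, smul_eq_mul, ContinuousLinearMap.proj_apply]
  ring

theorem pd2_mul_apply (a b : Fin n) :
    pd2 (fun y => y a * y b) i j x =
      (Pi.single j 1 : Fin n → ℝ) a * (Pi.single i 1 : Fin n → ℝ) b +
        (Pi.single i 1 : Fin n → ℝ) a * (Pi.single j 1 : Fin n → ℝ) b := by
  have hpd : pd (fun y => y a * y b) j =ᶠ[𝓝 x]
      fun y => (Pi.single j 1 : Fin n → ℝ) a * y b + y a * (Pi.single j 1 : Fin n → ℝ) b :=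
    Eventually.of_forall fun _ => pd_mul_apply a b
  rw [pd2_eq_of_eventuallyEq hpd
    (((hasFDerivAt_apply b x).const_mul _).add ((hasFDerivAt_apply a x).mul_const _))]
  simp only [add_apply, smul_apply, smul_eq_mul, ContinuousLinearMap.proj_apply]
  ring

theorem pd2_rpow (p : ℝ) (hf : ContDiffAt ℝ 2 f x) (hfx : 0 < f x) :
    pd2 (fun y => f y ^ p) i j x =
      p * (p - 1) * f x ^ (p - 2) * pd f i x * pd f j x + p * f x ^ (p - 1) * pd2 f i j x := by
  have hpos : ∀ᶠ y in 𝓝 x, 0 < f y := hf.continuousAt.eventually (lt_mem_nhds hfx)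
  have hφ' : HasDerivAt (fun t => p * t ^ (p - 1)) (p * (p - 1) * f x ^ (p - 2)) (f x) := by
    refine ((hasDerivAt_rpow_const (p := p - 1) (Or.inl hfx.ne')).const_mul p).congr_deriv ?_
    rw [show p - 1 - 1 = p - 2 by ring, mul_assoc]
  exact pd2_comp hf (hpos.mono fun y hy => hasDerivAt_rpow_const (Or.inl hy.ne')) hφ'

theorem pd2_sqrt_mul_apply {a b : Fin n} (ha : 0 < x a) (hb : 0 < x b) :
    pd2 (fun y => √(y a * y b)) i j x =
      -((x b * (Pi.single i 1 : Fin n → ℝ) a - x a * (Pi.single i 1 : Fin n → ℝ) b) *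
        (x b * (Pi.single j 1 : Fin n → ℝ) a - x a * (Pi.single j 1 : Fin n → ℝ) b)) /
        (4 * √(x a * x b) ^ 3) := by
  have hq : ContDiffAt ℝ 2 (fun y : Fin n → ℝ => y a * y b) x := by fun_prop
  have hpos : ∀ᶠ y in 𝓝 x, 0 < y a * y b :=
    hq.continuousAt.eventually (lt_mem_nhds (mul_pos ha hb))
  rw [pd2_comp hq (hpos.mono fun y hy => hasDerivAt_sqrt hy.ne')
    (hasDerivAt_one_div_two_mul_sqrt (mul_pos ha hb)), pd_mul_apply, pd_mul_apply,
    pd2_mul_apply]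
  have hs : 0 < √(x a * x b) := sqrt_pos.2 (mul_pos ha hb)
  have hsq : √(x a * x b) ^ 2 = x a * x b := sq_sqrt (mul_pos ha hb).le
  set s := √(x a * x b)
  field_simp
  rw [hsq]
  ring

end PartialDerivatives

namespace Matrix

variable {R : Type*} [CommRing R]

theorem det_fin_three_smul_vecMulVec_add_smul_vecMulVec (α β : R) (u v : Fin 3 → R) :
    (α • vecMulVec u u + β • vecMulVec v v).det = 0 := by
  simp only [det_fin_three, add_apply, smul_apply, vecMulVec_apply, smul_eq_mul]
  ring

theorem minor_eq_of_eq_smul_vecMulVec_add_smul_vecMulVec {m : Type*} {M : Matrix m m R}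
    {α β : R} {u v : m → R} (hM : M = α • vecMulVec u u + β • vecMulVec v v) (i j : m) :
    M i j * M j i - M i i * M j j = -(α * β * (u i * v j - u j * v i) ^ 2) := by
  simp only [hM, add_apply, smul_apply, vecMulVec_apply, smul_eq_mul]
  ring

end Matrix

noncomputable def base (x : Fin 3 → ℝ) : ℝ := x 0 + x 1 + √(x 1 * x 2)

section Base

variable {x : Fin 3 → ℝ}

theorem base_eq_clm_add_sqrt :
    base = fun y => (ContinuousLinearMap.proj (R := ℝ) (φ := fun _ : Fin 3 => ℝ) 0 +
      ContinuousLinearMap.proj (R := ℝ) (φ := fun _ : Fin 3 => ℝ) 1) y + √(y 1 * y 2) :=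
  rfl

theorem base_pos (h0 : 0 < x 0) (h1 : 0 < x 1) : 0 < base x := by
  unfold base
  positivity

theorem contDiffAt_sqrt_mul (h1 : 0 < x 1) (h2 : 0 < x 2) :
    ContDiffAt ℝ 2 (fun y : Fin 3 → ℝ => √(y 1 * y 2)) x :=
  ContDiffAt.sqrt (by fun_prop) (by positivity)

theorem contDiffAt_base (h1 : 0 < x 1) (h2 : 0 < x 2) : ContDiffAt ℝ 2 base x :=
  ContDiffAt.add (by fun_prop) (contDiffAt_sqrt_mul h1 h2)

theorem pd_base_zero (h1 : 0 < x 1) (h2 : 0 < x 2) : pd base 0 x = 1 := by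
  rw [base_eq_clm_add_sqrt,
    pd_clm_add _ ((contDiffAt_sqrt_mul h1 h2).differentiableAt two_ne_zero),
    pd_comp (hasDerivAt_sqrt (by positivity)) (by fun_prop), pd_mul_apply]
  simp

theorem pd2_base (h1 : 0 < x 1) (h2 : 0 < x 2) (i j : Fin 3) :
    pd2 base i j x = -(![0, x 2, -x 1] i * ![0, x 2, -x 1] j) / (4 * √(x 1 * x 2) ^ 3) := by
  rw [base_eq_clm_add_sqrt, pd2_clm_add _ (contDiffAt_sqrt_mul h1 h2), pd2_sqrt_mul_apply h1 h2]
  fin_cases i <;> fin_cases j <;> simp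

theorem hess_base_rpow (r : ℝ) (hx : ∀ i, 0 < x i) :
    hess (fun y => base y ^ r) x =
      (r * (r - 1) * base x ^ (r - 2)) •
          Matrix.vecMulVec (fun i => pd base i x) (fun i => pd base i x) +
        (-(r * base x ^ (r - 1)) / (4 * √(x 1 * x 2) ^ 3)) •
          Matrix.vecMulVec ![0, x 2, -x 1] ![0, x 2, -x 1] := by
  ext i j
  rw [hess, Matrix.of_apply, pd2_rpow r (contDiffAt_base (hx 1) (hx 2)) (base_pos (hx 0) (hx 1)),
    pd2_base (hx 1) (hx 2)]
  simp only [Matrix.add_apply, Matrix.smul_apply, Matrix.vecMulVec_apply, smul_eq_mul]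
  ring

theorem pd2_base_rpow_minor_ne_zero {r : ℝ} (hr : 1 < r) (hx : ∀ i, 0 < x i) :
    pd2 (fun y => base y ^ r) 0 1 x * pd2 (fun y => base y ^ r) 1 0 x -
      pd2 (fun y => base y ^ r) 0 0 x * pd2 (fun y => base y ^ r) 1 1 x ≠ 0 := by
  refine (Matrix.minor_eq_of_eq_smul_vecMulVec_add_smul_vecMulVec
    (hess_base_rpow r hx) 0 1).trans_ne ?_
  rw [pd_base_zero (hx 1) (hx 2)]
  have hbase := base_pos (hx 0) (hx 1)
  have hx2 := hx 2
  have hs : 0 < √(x 1 * x 2) := sqrt_pos.2 (mul_pos (hx 1) hx2)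
  have hr' : 0 < r - 1 := sub_pos.2 hr
  simp only [Matrix.cons_val_zero, Matrix.cons_val_one, mul_zero, sub_zero, one_mul]
  field_simp
  positivity

end Base

theorem stmt15 (r : ℝ) (hr : 1 < r) (f : (Fin 3 → ℝ) → ℝ)
    (hf : f = fun x => (x 0 + x 1 + Real.sqrt (x 1 * x 2)) ^ r) :
    (∀ x : Fin 3 → ℝ, (∀ i, 0 < x i) → (hess f x).det = 0) ∧
    (∃ x : Fin 3 → ℝ, (∀ i, 0 < x i) ∧ ∃ i j k l : Fin 3,
      pd2 f i l x * pd2 f j k x - pd2 f i k x * pd2 f j l x ≠ 0) := by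
  obtain rfl : f = fun y => base y ^ r := hf
  refine ⟨fun x hx => ?_, fun _ => 1, fun _ => one_pos, 0, 1, 0, 1,
    pd2_base_rpow_minor_ne_zero hr fun _ => one_pos⟩
  rw [hess_base_rpow r hx]
  exact Matrix.det_fin_three_smul_vecMulVec_add_smul_vecMulVec _ _ _ _
end
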